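/- Let a'₁, …, a'_{n+1} ∈ ℝ^n and a' ∈ ℝ^n be points such that, after the affine normalization U sending a'₁ to 0 and a'_{i+1} to (b_{1i}, …, b_{i−1,i}, bᵢ, 0, …, 0) with 0 ≤ b_{1i} ≤ b₁, |b_{ji}| ≤ b_j, b_{ii} = bᵢ > 0, the point U(a') lies in the box {0 ≤ x₁ ≤ b₁, |x₂| ≤ b₂, …, |xₙ| ≤ bₙ}. Then a' − a'₁ can be written as q₁(a'₂ − a'₁) + q₂(a'₃ − a'₁) + … + qₙ(a'_{n+1} − a'₁) with real coefficients satisfying |q_j| ≤ 2^{n−j} for j = 1, …, n. -/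

import Mathlib

/-! Back substitution. The vectors `v i = U (a'_{i+1})` form a triangular system with diagonal
`b`, so `y = U a'` is solved for from the last coordinate upwards: the last coefficient is
`y_m / b_m ∈ [-1, 1]`, and removing that multiple of `v m` leaves a vector with vanishing
`m`-th coordinate in twice the box. Halving it and recursing doubles the bound at each step,
which gives `|q_j| ≤ 2^{n-1-j}`. The affine bijection `U` fixes the origin at `a'₁`, so its
linear part carries the representation back. -/

open Finset

lemma abs_div_le_one_of_abs_le {K : Type*} [Field K] [LinearOrder K] [IsStrictOrderedRing K]
    {a c : K} (hc : 0 < c) (h : |a| ≤ c) : |a / c| ≤ 1 := by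
  rwa [abs_div, abs_of_pos hc, div_le_one hc]

section BoxLemma

variable {n : ℕ} {b : Fin n → ℝ} {v : Fin n → Fin n → ℝ}

lemma abs_half_sub_smul_le (hb : ∀ i, 0 < b i) (hdiag : ∀ i, v i i = b i)
    (hbelow : ∀ i j, j < i → |v i j| ≤ b j) (hzero : ∀ i j, i < j → v i j = 0)
    {y : Fin n → ℝ} {k : Fin n} (hy : ∀ j, |y j| ≤ b j) (hy0 : ∀ j, k < j → y j = 0)
    (j : Fin n) : |((1 / 2 : ℝ) • (y - (y k / b k) • v k)) j| ≤ b j := by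
  have hc := abs_div_le_one_of_abs_le (hb k) (hy k)
  simp only [Pi.smul_apply, Pi.sub_apply, smul_eq_mul, abs_mul]
  rcases lt_trichotomy j k with hjk | rfl | hkj
  · have hvk : |y k / b k| * |v k j| ≤ b j := by
      nlinarith [hbelow k j hjk, abs_nonneg (y k / b k), abs_nonneg (v k j)]
    have := abs_sub (y j) (y k / b k * v k j)
    rw [abs_mul] at this
    norm_num
    linarith [hy j]
  · simp [hdiag, (hb j).ne', (hb j).le]
  · simp [hy0 j hkj, hzero k j hkj, (hb j).le]

lemma half_sub_smul_apply_eq_zero (hb : ∀ i, 0 < b i) (hdiag : ∀ i, v i i = b i)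
    (hzero : ∀ i j, i < j → v i j = 0) {y : Fin n → ℝ} {k : Fin n}
    (hy0 : ∀ j, k < j → y j = 0) {j : Fin n} (hkj : k ≤ j) :
    ((1 / 2 : ℝ) • (y - (y k / b k) • v k)) j = 0 := by
  rcases hkj.eq_or_lt with rfl | hkj
  · simp [hdiag, (hb k).ne']
  · simp [hy0 j hkj, hzero k j hkj]

lemma box_lemma_of_apply_eq_zero_of_le (hb : ∀ i, 0 < b i) (hdiag : ∀ i, v i i = b i)
    (hbelow : ∀ i j, j < i → |v i j| ≤ b j) (hzero : ∀ i j, i < j → v i j = 0)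
    {m : ℕ} (hm : m ≤ n) {y : Fin n → ℝ} (hy : ∀ j, |y j| ≤ b j)
    (hy0 : ∀ j : Fin n, m ≤ j → y j = 0) :
    ∃ q : Fin n → ℝ, (∀ j, |q j| ≤ (2 : ℝ) ^ (m - 1 - (j : ℕ))) ∧
      (∀ j : Fin n, m ≤ j → q j = 0) ∧ y = ∑ j, q j • v j := by
  induction m generalizing y with
  | zero =>
    refine ⟨0, fun j => by simp, fun _ _ => rfl, ?_⟩
    ext j
    simp [hy0 j (Nat.zero_le _)]
  | succ m ih =>
    let k : Fin n := ⟨m, hm⟩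
    have hy0' : ∀ j, k < j → y j = 0 := fun j hj => hy0 j hj
    obtain ⟨q', hq'bound, hq'0, hq'sum⟩ := ih (by omega)
      (abs_half_sub_smul_le hb hdiag hbelow hzero hy hy0')
      fun j hj => half_sub_smul_apply_eq_zero hb hdiag hzero hy0' (k := k) hj
    set c := y k / b k
    have hc : |c| ≤ 1 := abs_div_le_one_of_abs_le (hb k) (hy k)
    refine ⟨fun i => 2 * q' i + if i = k then c else 0, fun j => ?_, fun j hj => ?_, ?_⟩
    · dsimp only
      rcases lt_trichotomy j k with hjk | rfl | hkj
      · have hjm : m - 1 - (j : ℕ) + 1 = m + 1 - 1 - j := by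
          have : (j : ℕ) < m := hjk
          omega
        rw [if_neg hjk.ne, add_zero, abs_mul, abs_two, ← hjm, pow_succ]
        linarith [hq'bound j]
      · rw [if_pos rfl, hq'0 k le_rfl, show m + 1 - 1 - (k : ℕ) = 0 by simp [k]]
        simpa using hc
      · simp [hq'0 j hkj.le, hkj.ne']
    · have hkj : k < j := hj
      simp [hq'0 j hkj.le, hkj.ne']
    · calc y = (2 : ℝ) • ((1 / 2 : ℝ) • (y - c • v k)) + c • v k := by module
        _ = ∑ j, (2 * q' j + if j = k then c else 0) • v j := by
          rw [hq'sum]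
          simp [smul_sum, add_smul, sum_add_distrib, smul_smul, ite_smul]

lemma box_lemma (hb : ∀ i, 0 < b i) (hdiag : ∀ i, v i i = b i)
    (hbelow : ∀ i j, j < i → |v i j| ≤ b j) (hzero : ∀ i j, i < j → v i j = 0)
    {y : Fin n → ℝ} (hy : ∀ j, |y j| ≤ b j) :
    ∃ q : Fin n → ℝ, (∀ j, |q j| ≤ (2 : ℝ) ^ (n - 1 - (j : ℕ))) ∧ y = ∑ j, q j • v j := by
  obtain ⟨q, hq, -, hsum⟩ := box_lemma_of_apply_eq_zero_of_le hb hdiag hbelow hzero le_rfl hy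
    fun j hj => absurd j.isLt (not_lt.mpr hj)
  exact ⟨q, hq, hsum⟩

end BoxLemma

lemma abs_le_of_apply_zero_mem_Icc {n : ℕ} (hn : 1 ≤ n) {z b : Fin n → ℝ} {j : Fin n}
    (h0 : 0 ≤ z ⟨0, hn⟩ ∧ z ⟨0, hn⟩ ≤ b ⟨0, hn⟩) (hpos : 0 < (j : ℕ) → |z j| ≤ b j) :
    |z j| ≤ b j := by
  rcases Nat.eq_zero_or_pos (j : ℕ) with hj | hj
  · obtain rfl : j = ⟨0, hn⟩ := Fin.ext hj
    exact abs_le.mpr ⟨by linarith [h0.1, h0.2], h0.2⟩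
  · exact hpos hj

lemma AffineEquiv.sub_eq_sum_smul_sub_of_map_eq {k E F ι : Type*} [Ring k] [AddCommGroup E]
    [Module k E] [AddCommGroup F] [Module k F] [Fintype ι] (U : E ≃ᵃ[k] F) {x p₀ : E}
    {p : ι → E} {q : ι → k} (hU0 : U p₀ = 0) (hx : U x = ∑ j, q j • U (p j)) :
    x - p₀ = ∑ j, q j • (p j - p₀) := by
  have hlin : ∀ z, U.linear (z - p₀) = U z := fun z => by
    simpa [hU0] using U.toAffineMap.linearMap_vsub z p₀
  apply U.linear.injective
  simp only [map_sum, map_smul, hlin, hx]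

/-- Transfer of the box lemma through an affine normalization `U`: if `U` sends
`a'₁` to `0` and the `a'_{i+1}` to box-lemma-shaped vectors, and `U(a')` lies in
the box, then `a' - a'₁` is a combination of the `a'_{j+1} - a'₁` with
coefficients `|q_j| ≤ 2^{n-j}`. -/
theorem box_lemma_transfer (n : ℕ) (hn : 1 ≤ n)
    (b : Fin n → ℝ) (hb : ∀ i, 0 < b i)
    (a' : Fin (n + 1) → EuclideanSpace ℝ (Fin n))
    (x : EuclideanSpace ℝ (Fin n))
    (U : EuclideanSpace ℝ (Fin n) ≃ᵃ[ℝ] EuclideanSpace ℝ (Fin n))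
    (hU0 : U (a' 0) = 0)
    (hdiag : ∀ i : Fin n, U (a' i.succ) i = b i)
    (hfirst : ∀ i : Fin n, 0 ≤ U (a' i.succ) ⟨0, hn⟩ ∧ U (a' i.succ) ⟨0, hn⟩ ≤ b ⟨0, hn⟩)
    (hmid : ∀ i j : Fin n, 0 < (j : ℕ) → j < i → |U (a' i.succ) j| ≤ b j)
    (hzero : ∀ i j : Fin n, i < j → U (a' i.succ) j = 0)
    (hx0 : 0 ≤ U x ⟨0, hn⟩ ∧ U x ⟨0, hn⟩ ≤ b ⟨0, hn⟩)
    (hxj : ∀ j : Fin n, 0 < (j : ℕ) → |U x j| ≤ b j) :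
    ∃ q : Fin n → ℝ, (∀ j, |q j| ≤ (2 : ℝ) ^ (n - 1 - (j : ℕ))) ∧
      x - a' 0 = ∑ j, q j • (a' j.succ - a' 0) := by
  obtain ⟨q, hq, hsum⟩ := box_lemma (v := fun i => (U (a' i.succ)).ofLp) hb hdiag
    (fun i j hji => abs_le_of_apply_zero_mem_Icc hn (hfirst i) fun hj => hmid i j hj hji)
    hzero (y := (U x).ofLp) fun j => abs_le_of_apply_zero_mem_Icc hn hx0 (hxj j)
  refine ⟨q, hq, U.sub_eq_sum_smul_sub_of_map_eq hU0 (WithLp.ofLp_injective 2 ?_)⟩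
  simpa [WithLp.ofLp_sum] using hsum
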